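/- arXiv:2306.13159 — 2 statements merged into one kernel-verified Lean document; each statement's English description precedes it below -/
import Mathlib

section
/- If a function f : ℂ → ℂ is continuous on an open set U ⊆ ℂ and complex differentiable at every point of U \ X, where X ⊆ U is a compact countable set all of whose accumulation points lie in X and whose set of accumulation points is finite (i.e., X is a Polish space with characteristic system (i, n) for some i ∈ {0, 1} and n ∈ ℕ), then for every triangle △(z₁, z₂, z₃) contained in U, the integral of f along the closed polygonal path [z₁, z₂, z₃, z₁] equals 0. -/
open Set

/-- The complex line integral of `f` along the segment from `a` to `b`:
`∫_{t ∈ [0,1]} f((1-t)·a + t·b) · (b - a) dt`. -/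
noncomputable def segmentIntegral (f : ℂ → ℂ) (a b : ℂ) : ℂ :=
  ∫ t in (0:ℝ)..1, f ((1 - t) • a + t • b) * (b - a)

/-- The integral of `f` along the closed polygonal path `[z₁, z₂, z₃, z₁]`. -/
noncomputable def triangleIntegral (f : ℂ → ℂ) (z₁ z₂ z₃ : ℂ) : ℂ :=
  segmentIntegral f z₁ z₂ + segmentIntegral f z₂ z₃ + segmentIntegral f z₃ z₁

/-- `w` is an accumulation point of `X`: every neighborhood of `w` contains a
point of `X` other than `w`. -/
def IsAccumulationPoint (w : ℂ) (X : Set ℂ) : Prop :=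
  ∀ V ∈ nhds w, ∃ x, x ∈ V ∩ X ∧ x ≠ w

/-! Continuity on `U` together with complex differentiability off the countable set `X` already
makes `f` holomorphic on `U`: on every closed disc in `U` the Cauchy integral formula still holds,
so `f` is given by a power series there. A holomorphic function on the convex triangle has a
primitive, so the integral along each edge is the difference of the primitive's values at its
endpoints, and these differences cancel around the closed path. -/

theorem Complex.differentiableOn_of_differentiableAt_off_countable {E : Type*}
    [NormedAddCommGroup E] [NormedSpace ℂ E] [CompleteSpace E] {f : ℂ → E} {U X : Set ℂ}
    (hU : IsOpen U) (hf : ContinuousOn f U) (hX : X.Countable)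
    (hd : ∀ z ∈ U \ X, DifferentiableAt ℂ f z) : DifferentiableOn ℂ f U := by
  intro z hz
  obtain ⟨R, hR, hRU⟩ := Metric.nhds_basis_closedBall.mem_iff.1 (hU.mem_nhds hz)
  lift R to NNReal using hR.le
  have hps := hasFPowerSeriesOnBall_of_differentiable_off_countable hX (hf.mono hRU)
    (fun w hw => hd w ⟨hRU (Metric.ball_subset_closedBall hw.1), hw.2⟩) hR
  exact hps.analyticAt.differentiableAt.differentiableWithinAt

theorem segmentIntegral_eq_sub_of_hasDerivWithinAt {f g : ℂ → ℂ} {s : Set ℂ}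
    (hs : Convex ℝ s) (hf : ContinuousOn f s) (hg : ∀ z ∈ s, HasDerivWithinAt g (f z) s z)
    {a b : ℂ} (ha : a ∈ s) (hb : b ∈ s) :
    segmentIntegral f a b = g b - g a := by
  have hmaps : MapsTo (AffineMap.lineMap a b : ℝ → ℂ) (Icc 0 1) s :=
    fun t ht => hs.lineMap_mem ha hb ht
  have hderiv : ∀ t ∈ Icc (0 : ℝ) 1, HasDerivWithinAt (g ∘ AffineMap.lineMap a b)
      (f (AffineMap.lineMap a b t) * (b - a)) (Icc 0 1) t := fun t ht =>
    (hg _ (hmaps ht)).comp t (AffineMap.hasDerivWithinAt_lineMap ..) hmaps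
  have hint : IntervalIntegrable (fun t : ℝ => f (AffineMap.lineMap a b t) * (b - a))
      MeasureTheory.volume 0 1 :=
    ((hf.comp (by fun_prop) hmaps).mul continuousOn_const).intervalIntegrable_of_Icc zero_le_one
  have hftc := intervalIntegral.integral_eq_sub_of_hasDerivAt_of_le zero_le_one
    (fun t ht => (hderiv t ht).continuousWithinAt)
    (fun t ht => (hderiv t (Ioo_subset_Icc_self ht)).hasDerivAt (Icc_mem_nhds ht.1 ht.2)) hint
  simpa [segmentIntegral, AffineMap.lineMap_apply_module] using hftc

theorem triangleIntegral_eq_zero_of_differentiableOn {f : ℂ → ℂ} {s : Set ℂ}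
    (hs : Convex ℝ s) (hf : DifferentiableOn ℂ f s) {z₁ z₂ z₃ : ℂ}
    (h₁ : z₁ ∈ s) (h₂ : z₂ ∈ s) (h₃ : z₃ ∈ s) :
    triangleIntegral f z₁ z₂ z₃ = 0 := by
  obtain ⟨g, hg⟩ := hs.exists_forall_hasDerivWithinAt hf
  rw [triangleIntegral, segmentIntegral_eq_sub_of_hasDerivWithinAt hs hf.continuousOn hg h₁ h₂,
    segmentIntegral_eq_sub_of_hasDerivWithinAt hs hf.continuousOn hg h₂ h₃,
    segmentIntegral_eq_sub_of_hasDerivWithinAt hs hf.continuousOn hg h₃ h₁]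
  ring

theorem stmt_3_general (f : ℂ → ℂ) (U : Set ℂ) (hU : IsOpen U)
    (hf : ContinuousOn f U) (X : Set ℂ)
    (hXcount : X.Countable)
    (hd : ∀ z ∈ U \ X, DifferentiableAt ℂ f z)
    (z₁ z₂ z₃ : ℂ) (htri : convexHull ℝ {z₁, z₂, z₃} ⊆ U) :
    triangleIntegral f z₁ z₂ z₃ = 0 := by
  have hfU := Complex.differentiableOn_of_differentiableAt_off_countable hU hf hXcount hd
  have hvertex : ∀ z ∈ ({z₁, z₂, z₃} : Set ℂ), z ∈ convexHull ℝ {z₁, z₂, z₃} :=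
    fun _ hz => subset_convexHull ℝ _ hz
  exact triangleIntegral_eq_zero_of_differentiableOn (convex_convexHull ℝ _) (hfU.mono htri)
    (hvertex _ (by simp)) (hvertex _ (by simp)) (hvertex _ (by simp))

theorem stmt_3 (f : ℂ → ℂ) (U : Set ℂ) (hU : IsOpen U)
    (hf : ContinuousOn f U) (X : Set ℂ) (hXU : X ⊆ U)
    (hXcomp : IsCompact X) (hXcount : X.Countable)
    (hacc : {w | IsAccumulationPoint w X} ⊆ X)
    (haccfin : {w | IsAccumulationPoint w X}.Finite)
    (hd : ∀ z ∈ U \ X, DifferentiableAt ℂ f z)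
    (z₁ z₂ z₃ : ℂ) (htri : convexHull ℝ {z₁, z₂, z₃} ⊆ U) :
    triangleIntegral f z₁ z₂ z₃ = 0 :=
  stmt_3_general f U hU hf X hXcount hd z₁ z₂ z₃ htri
end

section
/- Let f : ℂ → ℂ be continuous on an open set U ⊆ ℂ and complex differentiable at every point of U \ X, where X ⊆ U is a compact countable set with exactly one accumulation point w, and w ∈ X. If △(z₁, z₂, z₃) is a triangle contained in U with w ∉ △(z₁, z₂, z₃), then the integral of f along the closed polygonal path [z₁, z₂, z₃, z₁] equals 0. -/
/-
A point `z` of the triangle `T` is not `w`, hence not an accumulation point of `X`, so `f` is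
holomorphic on a punctured neighbourhood of `z` and continuous at `z`; by Riemann's removable
singularity theorem it is analytic at `z`. So `f` is holomorphic on an open neighbourhood of `T`, and
what remains is Goursat's theorem for triangles. Triangles in `T` with short sides lie in discs on
which `f` has a primitive, so their integrals vanish; cutting a triangle along its midlines into four
triangles with half the side lengths preserves the integral, so every triangle in `T` has integral 0.
-/
open Set

open Metric Filter intervalIntegral

lemma segmentIntegral_swap (f : ℂ → ℂ) (a b : ℂ) :
    segmentIntegral f b a = -segmentIntegral f a b := by
  set g := fun t : ℝ => f ((1 - t) • a + t • b) * (b - a)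
  calc segmentIntegral f b a = ∫ t in (0:ℝ)..1, -g (1 - t) := by
        refine integral_congr fun t _ => ?_
        simp only [g, sub_sub_cancel, neg_mul_eq_mul_neg, neg_sub, add_comm]
    _ = -∫ t in (0:ℝ)..1, g t := by rw [integral_neg, integral_comp_sub_left g 1]; norm_num

lemma segmentIntegral_lineMap_lineMap (f : ℂ → ℂ) (a b : ℂ) (s t : ℝ) :
    segmentIntegral f ((1 - s) • a + s • b) ((1 - t) • a + t • b) =
      ∫ u in s..t, f ((1 - u) • a + u • b) * (b - a) := by
  set g := fun u : ℝ => f ((1 - u) • a + u • b) * (b - a)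
  calc segmentIntegral f ((1 - s) • a + s • b) ((1 - t) • a + t • b)
        = ∫ x in (0:ℝ)..1, (t - s) • g ((t - s) * x + s) := by
        refine integral_congr fun x _ => ?_
        have hpt : (1 - x) • ((1 - s) • a + s • b) + x • ((1 - t) • a + t • b) =
            (1 - ((t - s) * x + s)) • a + ((t - s) * x + s) • b := by
          simp only [Complex.real_smul]; push_cast; ring
        rw [hpt]
        simp only [g, Complex.real_smul]
        push_cast
        ring
    _ = ∫ u in s..t, g u := by
        rw [integral_smul, smul_integral_comp_mul_add]; norm_num

section Segment

variable {f : ℂ → ℂ} {a b : ℂ}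

lemma sub_smul_add_smul_mem_segment {t : ℝ} (ht : t ∈ Icc (0:ℝ) 1) :
    (1 - t) • a + t • b ∈ segment ℝ a b := by
  simpa only [AffineMap.lineMap_apply_module] using lineMap_mem_segment ℝ a b ht

lemma continuousOn_segmentIntegrand (hf : ContinuousOn f (segment ℝ a b)) :
    ContinuousOn (fun t : ℝ => f ((1 - t) • a + t • b) * (b - a)) (Icc 0 1) :=
  (hf.comp (by fun_prop) fun _ => sub_smul_add_smul_mem_segment).mul continuousOn_const

lemma segmentIntegral_add_segmentIntegral_midpoint (hf : ContinuousOn f (segment ℝ a b)) :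
    segmentIntegral f a (midpoint ℝ a b) + segmentIntegral f (midpoint ℝ a b) b =
      segmentIntegral f a b := by
  have hg := (continuousOn_segmentIntegrand hf).intervalIntegrable_of_Icc
    (μ := MeasureTheory.volume) zero_le_one
  have hm : midpoint ℝ a b = (1 - (1/2:ℝ)) • a + (1/2:ℝ) • b := by
    simp only [midpoint_eq_smul_add, invOf_eq_inv, Complex.real_smul]; push_cast; ring
  have h₁ := segmentIntegral_lineMap_lineMap f a b 0 (1/2)
  have h₂ := segmentIntegral_lineMap_lineMap f a b (1/2) 1
  have h := segmentIntegral_lineMap_lineMap f a b 0 1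
  simp only [sub_zero, zero_smul, one_smul, add_zero, sub_self, zero_add] at h₁ h₂ h
  rw [hm, h₁, h₂, integral_add_adjacent_intervals, h]
  all_goals exact hg.mono_set (uIcc_subset_uIcc (by norm_num) (by norm_num))

lemma segmentIntegral_eq_sub_of_hasDerivAt {F : ℂ → ℂ}
    (hF : ∀ z ∈ segment ℝ a b, HasDerivAt F (f z) z) (hf : ContinuousOn f (segment ℝ a b)) :
    segmentIntegral f a b = F b - F a := by
  have hderiv : ∀ t ∈ uIcc (0:ℝ) 1, HasDerivAt (fun s : ℝ => F ((1 - s) • a + s • b))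
      (f ((1 - t) • a + t • b) * (b - a)) t := by
    intro t ht
    rw [uIcc_of_le zero_le_one] at ht
    have hline : HasDerivAt (fun s : ℝ => (1 - s) • a + s • b) ((-1 : ℝ) • a + (1 : ℝ) • b) t :=
      (((hasDerivAt_id t).const_sub 1).smul_const a).add ((hasDerivAt_id t).smul_const b)
    refine ((hF _ (sub_smul_add_smul_mem_segment ht)).scomp t hline).congr_deriv ?_
    simp only [neg_smul, one_smul, smul_eq_mul]
    ring
  rw [segmentIntegral, integral_eq_sub_of_hasDerivAt hderiv
    ((continuousOn_segmentIntegrand hf).intervalIntegrable_of_Icc zero_le_one)]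
  simp

end Segment

lemma dist_midpoint_midpoint_le_half {E : Type*} [NormedAddCommGroup E] [NormedSpace ℝ E]
    (a b c : E) : dist (midpoint ℝ a b) (midpoint ℝ b c) ≤ dist a c / 2 := by
  simpa [midpoint_comm a b] using dist_midpoint_midpoint_le b a b c

section Triangle

variable {f : ℂ → ℂ} {S : Set ℂ}

lemma triangleIntegral_eq_zero_of_hasDerivAt {F : ℂ → ℂ} (hS : Convex ℝ S)
    (hF : ∀ z ∈ S, HasDerivAt F (f z) z) (hf : ContinuousOn f S) {z₁ z₂ z₃ : ℂ}
    (h₁ : z₁ ∈ S) (h₂ : z₂ ∈ S) (h₃ : z₃ ∈ S) : triangleIntegral f z₁ z₂ z₃ = 0 := by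
  have hseg {a b : ℂ} (ha : a ∈ S) (hb : b ∈ S) : segmentIntegral f a b = F b - F a :=
    segmentIntegral_eq_sub_of_hasDerivAt (fun z hz => hF z (hS.segment_subset ha hb hz))
      (hf.mono (hS.segment_subset ha hb))
  rw [triangleIntegral, hseg h₁ h₂, hseg h₂ h₃, hseg h₃ h₁]
  ring

lemma triangleIntegral_eq_add_midpoint_triangles {z₁ z₂ z₃ : ℂ}
    (h₁₂ : ContinuousOn f (segment ℝ z₁ z₂)) (h₂₃ : ContinuousOn f (segment ℝ z₂ z₃))
    (h₃₁ : ContinuousOn f (segment ℝ z₃ z₁)) :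
    triangleIntegral f z₁ z₂ z₃ =
      triangleIntegral f z₁ (midpoint ℝ z₁ z₂) (midpoint ℝ z₃ z₁) +
      triangleIntegral f (midpoint ℝ z₁ z₂) z₂ (midpoint ℝ z₂ z₃) +
      triangleIntegral f (midpoint ℝ z₃ z₁) (midpoint ℝ z₂ z₃) z₃ +
      triangleIntegral f (midpoint ℝ z₁ z₂) (midpoint ℝ z₂ z₃) (midpoint ℝ z₃ z₁) := by
  simp only [triangleIntegral, ← segmentIntegral_add_segmentIntegral_midpoint h₁₂,
    ← segmentIntegral_add_segmentIntegral_midpoint h₂₃,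
    ← segmentIntegral_add_segmentIntegral_midpoint h₃₁,
    segmentIntegral_swap f (midpoint ℝ z₁ z₂) (midpoint ℝ z₃ z₁),
    segmentIntegral_swap f (midpoint ℝ z₂ z₃) (midpoint ℝ z₁ z₂),
    segmentIntegral_swap f (midpoint ℝ z₃ z₁) (midpoint ℝ z₂ z₃)]
  ring

def SmallTriangleIntegralsVanish (f : ℂ → ℂ) (S : Set ℂ) (r : ℝ) : Prop :=
  ∀ z₁ ∈ S, ∀ z₂ ∈ S, ∀ z₃ ∈ S, dist z₁ z₂ < r → dist z₂ z₃ < r → dist z₃ z₁ < r →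
    triangleIntegral f z₁ z₂ z₃ = 0

lemma SmallTriangleIntegralsVanish.two_mul {r : ℝ} (hS : Convex ℝ S) (hf : ContinuousOn f S)
    (h : SmallTriangleIntegralsVanish f S r) : SmallTriangleIntegralsVanish f S (2 * r) := by
  intro z₁ h₁ z₂ h₂ z₃ h₃ d₁₂ d₂₃ d₃₁
  have m₁₂ := hS.midpoint_mem h₁ h₂
  have m₂₃ := hS.midpoint_mem h₂ h₃
  have m₃₁ := hS.midpoint_mem h₃ h₁
  have e₁ := dist_midpoint_midpoint_le_half z₁ z₂ z₃
  have e₂ := dist_midpoint_midpoint_le_half z₂ z₃ z₁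
  have e₃ := dist_midpoint_midpoint_le_half z₃ z₁ z₂
  rw [dist_comm z₁ z₃] at e₁
  rw [dist_comm z₂ z₁] at e₂
  rw [dist_comm z₃ z₂] at e₃
  rw [triangleIntegral_eq_add_midpoint_triangles (hf.mono (hS.segment_subset h₁ h₂))
      (hf.mono (hS.segment_subset h₂ h₃)) (hf.mono (hS.segment_subset h₃ h₁)),
    h _ h₁ _ m₁₂ _ m₃₁, h _ m₁₂ _ h₂ _ m₂₃, h _ m₃₁ _ m₂₃ _ h₃, h _ m₁₂ _ m₂₃ _ m₃₁]
  · norm_num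
  -- every side of a midpoint triangle is half a side of the original triangle
  all_goals
    try simp only [dist_left_midpoint, dist_midpoint_right, Real.norm_ofNat]
    first
      | linarith
      | (rw [dist_comm]; linarith)

lemma SmallTriangleIntegralsVanish.two_pow_mul {r : ℝ} (hS : Convex ℝ S)
    (hf : ContinuousOn f S) (h : SmallTriangleIntegralsVanish f S r) (n : ℕ) :
    SmallTriangleIntegralsVanish f S (2 ^ n * r) := by
  induction n with
  | zero => simpa using h
  | succ n ih =>
    rw [pow_succ', mul_assoc]
    exact ih.two_mul hS hf

lemma SmallTriangleIntegralsVanish.triangleIntegral_eq_zero {r : ℝ} (hS : Convex ℝ S)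
    (hSb : Bornology.IsBounded S) (hf : ContinuousOn f S) (hr : 0 < r)
    (h : SmallTriangleIntegralsVanish f S r) {z₁ z₂ z₃ : ℂ}
    (h₁ : z₁ ∈ S) (h₂ : z₂ ∈ S) (h₃ : z₃ ∈ S) : triangleIntegral f z₁ z₂ z₃ = 0 := by
  obtain ⟨n, hn⟩ := pow_unbounded_of_one_lt (diam S / r) one_lt_two
  have hdiam : diam S < 2 ^ n * r := by rwa [div_lt_iff₀ hr] at hn
  have hside {a b : ℂ} (ha : a ∈ S) (hb : b ∈ S) : dist a b < 2 ^ n * r :=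
    (dist_le_diam_of_mem hSb ha hb).trans_lt hdiam
  exact h.two_pow_mul hS hf n _ h₁ _ h₂ _ h₃ (hside h₁ h₂) (hside h₂ h₃) (hside h₃ h₁)

end Triangle

theorem triangleIntegral_eq_zero_of_differentiableOn_s4 {f : ℂ → ℂ} {W : Set ℂ} (hW : IsOpen W)
    (hf : DifferentiableOn ℂ f W) {z₁ z₂ z₃ : ℂ} (hT : convexHull ℝ {z₁, z₂, z₃} ⊆ W) :
    triangleIntegral f z₁ z₂ z₃ = 0 := by
  set T := convexHull ℝ {z₁, z₂, z₃}
  have hTc : IsCompact T := (toFinite {z₁, z₂, z₃}).isCompact_convexHull (𝕜 := ℝ)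
  have hTconv : Convex ℝ T := convex_convexHull ℝ _
  obtain ⟨δ, hδ, hδW⟩ := hTc.exists_thickening_subset_open hW hT
  have hsmall : SmallTriangleIntegralsVanish f T δ := by
    intro a ha b hb c hc dab dbc dca
    have hball : ball a δ ⊆ W := (ball_subset_thickening ha δ).trans hδW
    obtain ⟨F, hF⟩ := (hf.mono hball).isExactOn_ball
    exact triangleIntegral_eq_zero_of_hasDerivAt (convex_ball a δ) hF
      (hf.continuousOn.mono hball) (mem_ball_self hδ) (mem_ball'.2 dab) (mem_ball.2 dca)
  exact hsmall.triangleIntegral_eq_zero hTconv hTc.isBounded (hf.continuousOn.mono hT) hδ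
    (subset_convexHull ℝ _ (by simp)) (subset_convexHull ℝ _ (by simp))
    (subset_convexHull ℝ _ (by simp))

lemma analyticAt_of_not_isAccumulationPoint {f : ℂ → ℂ} {U X : Set ℂ} (hU : IsOpen U)
    (hf : ContinuousOn f U) (hd : ∀ z ∈ U \ X, DifferentiableAt ℂ f z) {z : ℂ} (hz : z ∈ U)
    (hacc : ¬IsAccumulationPoint z X) : AnalyticAt ℂ f z := by
  simp only [IsAccumulationPoint, not_forall, not_exists, not_and, not_not] at hacc
  obtain ⟨V, hV, hVX⟩ := hacc
  refine Complex.analyticAt_of_differentiable_on_punctured_nhds_of_continuousAt ?_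
    (hf.continuousAt (hU.mem_nhds hz))
  filter_upwards [nhdsWithin_le_nhds (inter_mem hV (hU.mem_nhds hz)), self_mem_nhdsWithin]
    with y ⟨hyV, hyU⟩ hyz
  exact hd y ⟨hyU, fun hyX => hyz (hVX y ⟨hyV, hyX⟩)⟩

theorem stmt_4_general (f : ℂ → ℂ) (U : Set ℂ) (hU : IsOpen U)
    (hf : ContinuousOn f U) (X : Set ℂ)
    (w : ℂ) (hacc : {p | IsAccumulationPoint p X} = {w})
    (hd : ∀ z ∈ U \ X, DifferentiableAt ℂ f z)
    (z₁ z₂ z₃ : ℂ) (htri : convexHull ℝ {z₁, z₂, z₃} ⊆ U)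
    (hwout : w ∉ convexHull ℝ {z₁, z₂, z₃}) :
    triangleIntegral f z₁ z₂ z₃ = 0 := by
  have hanalytic : ∀ z ∈ convexHull ℝ {z₁, z₂, z₃}, AnalyticAt ℂ f z := fun z hz =>
    analyticAt_of_not_isAccumulationPoint hU hf hd (htri hz) fun h =>
      hwout (mem_singleton_iff.1 (hacc ▸ h : z ∈ ({w} : Set ℂ)) ▸ hz)
  exact triangleIntegral_eq_zero_of_differentiableOn_s4 (isOpen_analyticAt ℂ f)
    (fun z hz => hz.differentiableAt.differentiableWithinAt) hanalytic

theorem stmt_4 (f : ℂ → ℂ) (U : Set ℂ) (hU : IsOpen U)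
    (hf : ContinuousOn f U) (X : Set ℂ) (hXU : X ⊆ U)
    (hXcomp : IsCompact X) (hXcount : X.Countable)
    (w : ℂ) (hacc : {p | IsAccumulationPoint p X} = {w}) (hwX : w ∈ X)
    (hd : ∀ z ∈ U \ X, DifferentiableAt ℂ f z)
    (z₁ z₂ z₃ : ℂ) (htri : convexHull ℝ {z₁, z₂, z₃} ⊆ U)
    (hwout : w ∉ convexHull ℝ {z₁, z₂, z₃}) :
    triangleIntegral f z₁ z₂ z₃ = 0 :=
  stmt_4_general f U hU hf X w hacc hd z₁ z₂ z₃ htri hwout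
end
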